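/- arXiv:1401.6230 — 2 statements merged into one kernel-verified Lean document; each statement's English description precedes it below -/
import Mathlib

section
/- Let N, j_1, j_2, t_1, t_2 be positive integers with j_1 < N−t_1 < N−t_2 and j_1 < j_2 < N−t_2, and let S^↗(N) = {σ ∈ S_N(312) : σ(N−t_1) = j_1 and σ(N−t_2) = j_2}. If j_2 < N − t_1 + 1, then S^↗(N) is empty. -/
open Finset

/-- A permutation of `Fin N` avoids the pattern 312 if there are no indices
`i₁ < i₂ < i₃` with `σ i₂ < σ i₃ < σ i₁`. -/
def Avoids312 {N : ℕ} (σ : Equiv.Perm (Fin N)) : Prop :=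
  ¬ ∃ i₁ i₂ i₃ : Fin N, i₁ < i₂ ∧ i₂ < i₃ ∧ σ i₂ < σ i₃ ∧ σ i₃ < σ i₁

instance {N : ℕ} : DecidablePred (Avoids312 (N := N)) := fun σ => by
  unfold Avoids312; infer_instance

/-- The set `S_N(312)` of 312-avoiding permutations of `{1,…,N}`. -/
def avoiding (N : ℕ) : Finset (Equiv.Perm (Fin N)) :=
  Finset.univ.filter Avoids312

/-- `permVal σ i` is the value `σ(i)` in 1-based indexing (both `i` and the
value range over `{1,…,N}`); it is `0` if `i - 1` is out of range. -/
def permVal {N : ℕ} (σ : Equiv.Perm (Fin N)) (i : ℕ) : ℕ :=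
  if h : i - 1 < N then (σ ⟨i - 1, h⟩ : ℕ) + 1 else 0

/-- `S^•(N,i,j) = {σ ∈ S_N(312) : σ(i) = j}`. -/
def SBullet (N i j : ℕ) : Finset (Equiv.Perm (Fin N)) :=
  (avoiding N).filter fun σ => permVal σ i = j

/-- The uniform probability on `S_N(312)`: `P_N(A) = |A| / C_N`. -/
noncomputable def PN (N : ℕ) (A : Finset (Equiv.Perm (Fin N))) : ℝ :=
  (A.card : ℝ) / (catalan N : ℝ)

def STwoPred (N i₁ i₂ j₁ j₂ : ℕ) (σ : Equiv.Perm (Fin N)) : Prop :=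
  permVal σ i₁ = j₁ ∧ permVal σ i₂ = j₂

instance instDecSTwoPred (N i₁ i₂ j₁ j₂ : ℕ) :
    DecidablePred (STwoPred N i₁ i₂ j₁ j₂) := fun σ => by
  unfold STwoPred; infer_instance

/-- `{σ ∈ S_N(312) : σ(i₁) = j₁ and σ(i₂) = j₂}`. -/
def STwo (N i₁ i₂ j₁ j₂ : ℕ) : Finset (Equiv.Perm (Fin N)) :=
  (avoiding N).filter (STwoPred N i₁ i₂ j₁ j₂)

theorem stmt7 (N t₁ t₂ j₁ j₂ : ℕ) (hN : 0 < N) (ht₁ : 0 < t₁) (ht₂ : 0 < t₂)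
    (hj₁ : 0 < j₁) (hj₂ : 0 < j₂)
    (h1 : j₁ < N - t₁) (h2 : N - t₁ < N - t₂) (h3 : j₁ < j₂) (h4 : j₂ < N - t₂)
    (h5 : j₂ < N - t₁ + 1) :
    STwo N (N - t₁) (N - t₂) j₁ j₂ = ∅ := by
  rw [Finset.eq_empty_iff_forall_notMem]
  intro σ hσ
  rw [STwo, Finset.mem_filter, avoiding, Finset.mem_filter] at hσ
  obtain ⟨⟨-, havoid⟩, hv1, hv2⟩ := hσ
  have ht1N : t₁ < N := lt_of_le_of_lt (Nat.le_add_left _ _) (Nat.add_lt_of_lt_sub h1)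
  have hbN : N - t₂ - 1 < N := lt_of_le_of_lt (Nat.sub_le _ _) (Nat.sub_lt hN ht₂)
  have haN : N - t₁ - 1 < N := lt_of_le_of_lt (Nat.sub_le _ _) (Nat.sub_lt hN ht₁)
  have hNt1 : N - t₁ < N := Nat.sub_lt hN ht₁
  have hj2N : j₂ < N := lt_of_lt_of_le h4 (Nat.sub_le _ _)
  have hva : (σ ⟨N - t₁ - 1, haN⟩ : ℕ) = j₁ - 1 := by
    rw [permVal, dif_pos haN] at hv1; omega
  have hvb : (σ ⟨N - t₂ - 1, hbN⟩ : ℕ) = j₂ - 1 := by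
    rw [permVal, dif_pos hbN] at hv2; omega
  have hkey : ∃ x : Fin N, (x : ℕ) < N - t₁ - 1 ∧ j₂ ≤ (σ x : ℕ) := by
    by_contra hcon
    have hstep : ∀ x : Fin N, j₂ ≤ (σ x : ℕ) → N - t₁ ≤ (x : ℕ) := by
      intro x hx
      rcases Nat.lt_or_ge (x : ℕ) (N - t₁) with hlt | hge
      · rcases Nat.lt_or_ge (x : ℕ) (N - t₁ - 1) with h' | h''
        · exact absurd ⟨x, h', hx⟩ hcon
        · have hxa : x = ⟨N - t₁ - 1, haN⟩ := Fin.ext (show (x:ℕ) = N - t₁ - 1 by omega)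
          rw [hxa, hva] at hx; omega
      · exact hge
    have hmap : ∀ y ∈ Finset.Ici (⟨j₂, hj2N⟩ : Fin N),
        σ.symm y ∈ (Finset.Ici (⟨N - t₁, hNt1⟩ : Fin N)).erase ⟨N - t₂ - 1, hbN⟩ := by
      intro y hy
      rw [Finset.mem_Ici, Fin.le_def] at hy
      change j₂ ≤ (y : ℕ) at hy
      rw [Finset.mem_erase]
      constructor
      · intro hyb
        have h' : (σ (σ.symm y) : ℕ) = j₂ - 1 := by rw [hyb]; exact hvb
        rw [Equiv.apply_symm_apply] at h'
        omega
      · rw [Finset.mem_Ici, Fin.le_def]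
        exact hstep _ (by rw [Equiv.apply_symm_apply]; exact hy)
    have hinj : Set.InjOn (fun y => σ.symm y)
        (Finset.Ici (⟨j₂, hj2N⟩ : Fin N)) := fun y₁ _ y₂ _ h => σ.symm.injective h
    have hcard := Finset.card_le_card_of_injOn _ hmap hinj
    have hbmem : (⟨N - t₂ - 1, hbN⟩ : Fin N) ∈ Finset.Ici (⟨N - t₁, hNt1⟩ : Fin N) := by
      rw [Finset.mem_Ici, Fin.le_def]; show N - t₁ ≤ N - t₂ - 1; omega
    rw [Fin.card_Ici, Finset.card_erase_of_mem hbmem, Fin.card_Ici] at hcard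
    simp only [Fin.val_mk] at hcard
    omega
  obtain ⟨x, hxa, hxval⟩ := hkey
  refine havoid ⟨x, ⟨N - t₁ - 1, haN⟩, ⟨N - t₂ - 1, hbN⟩, ?_, ?_, ?_, ?_⟩
  · rw [Fin.lt_def]; exact hxa
  · rw [Fin.lt_def]; show N - t₁ - 1 < N - t₂ - 1; omega
  · rw [Fin.lt_def, hva, hvb]; omega
  · rw [Fin.lt_def, hvb]; omega
end

section
/- Let N, j_1, j_2, t_1, t_2 be positive integers with j_1 < N−t_1 < N−t_2, j_1 < j_2 < N−t_2, and j_2 = N−t_1+1, and let S^↗(N) = {σ ∈ S_N(312) : σ(N−t_1) = j_1 and σ(N−t_2) = j_2}. Then |S^↗(N)| = C_{N−t_1−j_1} · C_{t_1−t_2−1} · C_{j_1−1} · C_{t_2}. -/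
open Finset

lemma avoids_iff {N : ℕ} (σ : Equiv.Perm (Fin N)) :
    Avoids312 σ ↔ ∀ i₁ i₂ i₃ : Fin N, i₁ < i₂ → i₂ < i₃ → σ i₂ < σ i₃ → σ i₃ < σ i₁ → False := by
  unfold Avoids312
  push_neg
  constructor
  · intro h i₁ i₂ i₃ h1 h2 h3 h4
    rcases h i₁ i₂ i₃ h1 h2 h3 with h5
    exact absurd h4 (not_lt.mpr h5)
  · intro h i₁ i₂ i₃ h1 h2 h3
    by_contra h4
    exact h i₁ i₂ i₃ h1 h2 h3 (lt_of_not_ge h4)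

-- cardinality of a filter of positions with val in [lo, hi)
lemma card_filter_val_Ico {N : ℕ} (lo hi : ℕ) (h : hi ≤ N) :
    (Finset.univ.filter fun i : Fin N => lo ≤ (i : ℕ) ∧ (i : ℕ) < hi).card = hi - lo := by
  rw [← Nat.card_Ico lo hi]
  refine Finset.card_bij (fun i _ => (i : ℕ)) ?_ ?_ ?_
  · intro a ha; simp at ha ⊢; omega
  · intro a ha b hb hab; exact Fin.ext hab
  · intro b hb
    simp at hb
    exact ⟨⟨b, by omega⟩, by simp; omega, rfl⟩

lemma card_filter_sigma_val_Ico {N : ℕ} (σ : Equiv.Perm (Fin N)) (lo hi : ℕ) (h : hi ≤ N) :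
    (Finset.univ.filter fun i : Fin N => lo ≤ (σ i : ℕ) ∧ (σ i : ℕ) < hi).card = hi - lo := by
  rw [← card_filter_val_Ico (N := N) lo hi h]
  refine Finset.card_bij (fun i _ => σ i) ?_ ?_ ?_
  · intro a ha; simpa using (by simpa using ha)
  · intro a _ b _ hab; exact σ.injective hab
  · intro b hb
    exact ⟨σ.symm b, by simpa using (by simpa using hb), by simp⟩

-- segment bijectivity tool
lemma seg_mem {N : ℕ} (σ : Equiv.Perm (Fin N)) (S T : Finset (Fin N))
    (h : ∀ i ∈ S, σ i ∈ T) (hcard : T.card ≤ S.card) :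
    ∀ i, σ i ∈ T → i ∈ S := by
  have himg : S.image σ = T := by
    apply Finset.eq_of_subset_of_card_le
    · intro x hx; rcases Finset.mem_image.mp hx with ⟨y, hy, rfl⟩; exact h y hy
    · rwa [Finset.card_image_of_injective _ σ.injective]
  intro i hi
  rw [← himg] at hi
  rcases Finset.mem_image.mp hi with ⟨y, hy, hyi⟩
  rwa [← σ.injective hyi]

section Restrict

variable {N : ℕ} (σ : Equiv.Perm (Fin N)) (p v m : ℕ)

/-- restriction of σ to positions [p, p+m), assuming values land in [v, v+m) -/
noncomputable def restrictPerm (hpm : p + m ≤ N)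
    (H : ∀ i : Fin N, p ≤ (i : ℕ) → (i : ℕ) < p + m → v ≤ (σ i : ℕ) ∧ (σ i : ℕ) < v + m) :
    Equiv.Perm (Fin m) :=
  Equiv.ofBijective
    (fun i => ⟨(σ ⟨p + (i : ℕ), by omega⟩ : ℕ) - v, by
      have := H ⟨p + (i : ℕ), by omega⟩ (by simp) (by simp)
      omega⟩)
    (by
      rw [← Finite.injective_iff_bijective]
      intro i j hij
      have hi := H ⟨p + (i : ℕ), by omega⟩ (by simp) (by simp)
      have hj := H ⟨p + (j : ℕ), by omega⟩ (by simp) (by simp)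
      have hv : (σ ⟨p + (i : ℕ), by omega⟩ : ℕ) - v = (σ ⟨p + (j : ℕ), by omega⟩ : ℕ) - v :=
        congrArg Fin.val hij
      have hv' : (σ ⟨p + (i : ℕ), by omega⟩ : ℕ) = (σ ⟨p + (j : ℕ), by omega⟩ : ℕ) := by omega
      have := σ.injective (Fin.ext hv')
      have := congrArg Fin.val this
      simp only [] at this
      exact Fin.ext (by omega))

lemma restrictPerm_apply (hpm : p + m ≤ N) (H) (i : Fin m) :
    ((restrictPerm σ p v m hpm H i : Fin m) : ℕ) = (σ ⟨p + (i : ℕ), by omega⟩ : ℕ) - v := rfl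

lemma restrictPerm_avoids (hpm : p + m ≤ N) (H) (hav : Avoids312 σ) :
    Avoids312 (restrictPerm σ p v m hpm H) := by
  rw [avoids_iff] at hav ⊢
  intro i₁ i₂ i₃ h12 h23 hv1 hv2
  have e1 := restrictPerm_apply σ p v m hpm H i₁
  have e2 := restrictPerm_apply σ p v m hpm H i₂
  have e3 := restrictPerm_apply σ p v m hpm H i₃
  have b1 := H ⟨p + (i₁ : ℕ), by omega⟩ (by simp) (by simp)
  have b2 := H ⟨p + (i₂ : ℕ), by omega⟩ (by simp) (by simp)
  have b3 := H ⟨p + (i₃ : ℕ), by omega⟩ (by simp) (by simp)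
  refine hav ⟨p + (i₁ : ℕ), by omega⟩ ⟨p + (i₂ : ℕ), by omega⟩ ⟨p + (i₃ : ℕ), by omega⟩ ?_ ?_ ?_ ?_
  · exact Fin.mk_lt_mk.mpr (by have := Fin.lt_def.mp h12; omega)
  · exact Fin.mk_lt_mk.mpr (by have := Fin.lt_def.mp h23; omega)
  · rw [Fin.lt_def]
    have := Fin.lt_def.mp hv1
    omega
  · rw [Fin.lt_def]
    have := Fin.lt_def.mp hv2
    omega

end Restrict

section Glue4

variable (a b c d : ℕ) (A : Equiv.Perm (Fin a)) (B : Equiv.Perm (Fin b))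
  (C : Equiv.Perm (Fin c)) (D : Equiv.Perm (Fin d))

def g4 (i : ℕ) : ℕ :=
  if h1 : i < a then A ⟨i, h1⟩
  else if h2 : i < a + b then ((B ⟨i - a, by omega⟩ : Fin b) : ℕ) + (a + 1)
  else if h3 : i = a + b then a
  else if h4 : i < a + b + 1 + c then ((C ⟨i - (a + b + 1), by omega⟩ : Fin c) : ℕ) + (a + b + 2)
  else if h5 : i = a + b + 1 + c then a + b + 1
  else if h6 : i - (a + b + c + 2) < d then ((D ⟨i - (a + b + c + 2), h6⟩ : Fin d) : ℕ) + (a + b + c + 2)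
  else 0

lemma g4_eq_A {i : ℕ} (h : i < a) : g4 a b c d A B C D i = A ⟨i, h⟩ := dif_pos h

lemma g4_eq_B {i : ℕ} (h1 : a ≤ i) (h2 : i < a + b) :
    g4 a b c d A B C D i = ((B ⟨i - a, by omega⟩ : Fin b) : ℕ) + (a + 1) := by
  unfold g4; rw [dif_neg (by omega), dif_pos h2]

lemma g4_eq_p1 : g4 a b c d A B C D (a + b) = a := by
  unfold g4; rw [dif_neg (by omega), dif_neg (by omega), dif_pos rfl]

lemma g4_eq_C {i : ℕ} (h1 : a + b + 1 ≤ i) (h2 : i < a + b + 1 + c) :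
    g4 a b c d A B C D i = ((C ⟨i - (a + b + 1), by omega⟩ : Fin c) : ℕ) + (a + b + 2) := by
  unfold g4; rw [dif_neg (by omega), dif_neg (by omega), dif_neg (by omega), dif_pos h2]

lemma g4_eq_p2 : g4 a b c d A B C D (a + b + 1 + c) = a + b + 1 := by
  unfold g4
  rw [dif_neg (by omega), dif_neg (by omega), dif_neg (by omega), dif_neg (by omega), dif_pos rfl]

lemma g4_eq_D {i : ℕ} (h1 : a + b + c + 2 ≤ i) (h2 : i < a + b + c + d + 2) :
    g4 a b c d A B C D i = ((D ⟨i - (a + b + c + 2), by omega⟩ : Fin d) : ℕ) + (a + b + c + 2) := by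
  unfold g4
  rw [dif_neg (by omega), dif_neg (by omega), dif_neg (by omega), dif_neg (by omega),
    dif_neg (by omega), dif_pos (by omega)]

lemma g4_cases (i : ℕ) (hi : i < a + b + c + d + 2) :
    (i < a ∧ g4 a b c d A B C D i < a) ∨
    (a ≤ i ∧ i < a + b ∧ a + 1 ≤ g4 a b c d A B C D i ∧ g4 a b c d A B C D i < a + b + 1) ∨
    (i = a + b ∧ g4 a b c d A B C D i = a) ∨
    (a + b + 1 ≤ i ∧ i < a + b + 1 + c ∧ a + b + 2 ≤ g4 a b c d A B C D i ∧
      g4 a b c d A B C D i < a + b + 2 + c) ∨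
    (i = a + b + 1 + c ∧ g4 a b c d A B C D i = a + b + 1) ∨
    (a + b + c + 2 ≤ i ∧ i < a + b + c + d + 2 ∧ a + b + c + 2 ≤ g4 a b c d A B C D i ∧
      g4 a b c d A B C D i < a + b + c + d + 2) := by
  by_cases h1 : i < a
  · exact Or.inl ⟨h1, by rw [g4_eq_A a b c d A B C D h1]; exact (A ⟨i, h1⟩).is_lt⟩
  by_cases h2 : i < a + b
  · refine Or.inr (Or.inl ⟨by omega, h2, ?_, ?_⟩) <;> rw [g4_eq_B a b c d A B C D (by omega) h2]
    · omega
    · exact lt_of_lt_of_le (Nat.add_lt_add_right (Fin.is_lt _) _) (by omega)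
  by_cases h3 : i = a + b
  · exact Or.inr (Or.inr (Or.inl ⟨h3, by rw [h3, g4_eq_p1]⟩))
  by_cases h4 : i < a + b + 1 + c
  · refine Or.inr (Or.inr (Or.inr (Or.inl ⟨by omega, h4, ?_, ?_⟩))) <;>
      rw [g4_eq_C a b c d A B C D (by omega) h4]
    · omega
    · exact lt_of_lt_of_le (Nat.add_lt_add_right (Fin.is_lt _) _) (by omega)
  by_cases h5 : i = a + b + 1 + c
  · exact Or.inr (Or.inr (Or.inr (Or.inr (Or.inl ⟨h5, by rw [h5, g4_eq_p2]⟩))))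
  refine Or.inr (Or.inr (Or.inr (Or.inr (Or.inr ⟨by omega, hi, ?_, ?_⟩)))) <;>
    rw [g4_eq_D a b c d A B C D (by omega) hi]
  · omega
  · exact lt_of_lt_of_le (Nat.add_lt_add_right (Fin.is_lt _) _) (by omega)

end Glue4

section Glue4b

variable (a b c d : ℕ) (A : Equiv.Perm (Fin a)) (B : Equiv.Perm (Fin b))
  (C : Equiv.Perm (Fin c)) (D : Equiv.Perm (Fin d))

lemma g4_inj {i j : ℕ} (hi : i < a + b + c + d + 2) (hj : j < a + b + c + d + 2)
    (h : g4 a b c d A B C D i = g4 a b c d A B C D j) : i = j := by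
  rcases g4_cases a b c d A B C D i hi with
    (⟨p1, p2⟩ | ⟨p1, p1', p2, p2'⟩ | ⟨p1, p2⟩ | ⟨p1, p1', p2, p2'⟩ | ⟨p1, p2⟩ | ⟨p1, p1', p2, p2'⟩) <;>
  rcases g4_cases a b c d A B C D j hj with
    (⟨q1, q2⟩ | ⟨q1, q1', q2, q2'⟩ | ⟨q1, q2⟩ | ⟨q1, q1', q2, q2'⟩ | ⟨q1, q2⟩ | ⟨q1, q1', q2, q2'⟩)
  all_goals try omega
  · rw [g4_eq_A a b c d A B C D p1, g4_eq_A a b c d A B C D q1] at h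
    have := congrArg Fin.val (A.injective (Fin.ext h))
    simpa using this
  · rw [g4_eq_B a b c d A B C D q1 q1'] at h
    rw [g4_eq_B a b c d A B C D p1 p1'] at h
    have := congrArg Fin.val (B.injective (Fin.ext (Nat.add_right_cancel h)))
    simp only [] at this
    omega
  · rw [g4_eq_C a b c d A B C D q1 q1'] at h
    rw [g4_eq_C a b c d A B C D p1 p1'] at h
    have := congrArg Fin.val (C.injective (Fin.ext (Nat.add_right_cancel h)))
    simp only [] at this
    omega
  · rw [g4_eq_D a b c d A B C D q1 q1'] at h
    rw [g4_eq_D a b c d A B C D p1 p1'] at h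
    have := congrArg Fin.val (D.injective (Fin.ext (Nat.add_right_cancel h)))
    simp only [] at this
    omega

end Glue4b

section Glue4c

variable (a b c d : ℕ) (A : Equiv.Perm (Fin a)) (B : Equiv.Perm (Fin b))
  (C : Equiv.Perm (Fin c)) (D : Equiv.Perm (Fin d))

lemma g4_avoids_aux (hA : Avoids312 A) (hB : Avoids312 B) (hC : Avoids312 C) (hD : Avoids312 D)
    {i1 i2 i3 : ℕ} (hi3 : i3 < a + b + c + d + 2)
    (h12 : i1 < i2) (h23 : i2 < i3)
    (hv1 : g4 a b c d A B C D i2 < g4 a b c d A B C D i3)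
    (hv2 : g4 a b c d A B C D i3 < g4 a b c d A B C D i1) : False := by
  rcases g4_cases a b c d A B C D i1 (by omega) with
    (⟨p1, p2⟩ | ⟨p1, p1', p2, p2'⟩ | ⟨p1, p2⟩ | ⟨p1, p1', p2, p2'⟩ | ⟨p1, p2⟩ | ⟨p1, p1', p2, p2'⟩) <;>
  rcases g4_cases a b c d A B C D i2 (by omega) with
    (⟨q1, q2⟩ | ⟨q1, q1', q2, q2'⟩ | ⟨q1, q2⟩ | ⟨q1, q1', q2, q2'⟩ | ⟨q1, q2⟩ | ⟨q1, q1', q2, q2'⟩) <;>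
  rcases g4_cases a b c d A B C D i3 hi3 with
    (⟨r1, r2⟩ | ⟨r1, r1', r2, r2'⟩ | ⟨r1, r2⟩ | ⟨r1, r1', r2, r2'⟩ | ⟨r1, r2⟩ | ⟨r1, r1', r2, r2'⟩)
  all_goals try omega
  · rw [g4_eq_A a b c d A B C D q1] at hv1
    rw [g4_eq_A a b c d A B C D r1] at hv1 hv2
    rw [g4_eq_A a b c d A B C D p1] at hv2
    exact (avoids_iff A).mp hA ⟨i1, p1⟩ ⟨i2, q1⟩ ⟨i3, r1⟩ (Fin.mk_lt_mk.mpr h12)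
      (Fin.mk_lt_mk.mpr h23) (Fin.lt_def.mpr hv1) (Fin.lt_def.mpr hv2)
  · rw [g4_eq_B a b c d A B C D q1 q1'] at hv1
    rw [g4_eq_B a b c d A B C D r1 r1'] at hv1 hv2
    rw [g4_eq_B a b c d A B C D p1 p1'] at hv2
    exact (avoids_iff B).mp hB _ _ _ (Fin.mk_lt_mk.mpr (by omega)) (Fin.mk_lt_mk.mpr (by omega))
      (Fin.lt_def.mpr (Nat.lt_of_add_lt_add_right hv1))
      (Fin.lt_def.mpr (Nat.lt_of_add_lt_add_right hv2))
  · rw [g4_eq_C a b c d A B C D q1 q1'] at hv1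
    rw [g4_eq_C a b c d A B C D r1 r1'] at hv1 hv2
    rw [g4_eq_C a b c d A B C D p1 p1'] at hv2
    exact (avoids_iff C).mp hC _ _ _ (Fin.mk_lt_mk.mpr (by omega)) (Fin.mk_lt_mk.mpr (by omega))
      (Fin.lt_def.mpr (Nat.lt_of_add_lt_add_right hv1))
      (Fin.lt_def.mpr (Nat.lt_of_add_lt_add_right hv2))
  · rw [g4_eq_D a b c d A B C D q1 q1'] at hv1
    rw [g4_eq_D a b c d A B C D r1 r1'] at hv1 hv2
    rw [g4_eq_D a b c d A B C D p1 p1'] at hv2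
    exact (avoids_iff D).mp hD _ _ _ (Fin.mk_lt_mk.mpr (by omega)) (Fin.mk_lt_mk.mpr (by omega))
      (Fin.lt_def.mpr (Nat.lt_of_add_lt_add_right hv1))
      (Fin.lt_def.mpr (Nat.lt_of_add_lt_add_right hv2))

end Glue4c

section Glue4d

variable {N : ℕ} (a b c d : ℕ) (A : Equiv.Perm (Fin a)) (B : Equiv.Perm (Fin b))
  (C : Equiv.Perm (Fin c)) (D : Equiv.Perm (Fin d))

noncomputable def glue4 (hN : a + b + c + d + 2 = N) : Equiv.Perm (Fin N) :=
  Equiv.ofBijective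
    (fun i => (⟨g4 a b c d A B C D i, by
      rcases g4_cases a b c d A B C D i (by omega) with
        (⟨p1, p2⟩ | ⟨p1, p1', p2, p2'⟩ | ⟨p1, p2⟩ | ⟨p1, p1', p2, p2'⟩ | ⟨p1, p2⟩ | ⟨p1, p1', p2, p2'⟩) <;>
        omega⟩ : Fin N))
    (by
      rw [← Finite.injective_iff_bijective]
      intro i j hij
      have := congrArg Fin.val hij
      simp only [] at this
      exact Fin.ext (g4_inj a b c d A B C D (by omega) (by omega) this))

lemma glue4_apply (hN : a + b + c + d + 2 = N) (i : Fin N) :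
    ((glue4 a b c d A B C D hN i : Fin N) : ℕ) = g4 a b c d A B C D (i : ℕ) := rfl

lemma glue4_avoids (hN : a + b + c + d + 2 = N)
    (hA : Avoids312 A) (hB : Avoids312 B) (hC : Avoids312 C) (hD : Avoids312 D) :
    Avoids312 (glue4 a b c d A B C D hN) := by
  rw [avoids_iff]
  intro i1 i2 i3 h12 h23 hv1 hv2
  rw [Fin.lt_def] at h12 h23 hv1 hv2
  rw [glue4_apply, glue4_apply] at hv1 hv2
  exact g4_avoids_aux a b c d A B C D hA hB hC hD (by omega) h12 h23 hv1 hv2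

end Glue4d

section Struct

variable {N : ℕ} {J P Q : ℕ} {σ : Equiv.Perm (Fin N)}
  (hav : Avoids312 σ) (hJP : J < P) (hPQ : P < Q) (hQN : Q + 1 < N)
  (hP : ∀ i : Fin N, (i : ℕ) = P → (σ i : ℕ) = J)
  (hQ : ∀ i : Fin N, (i : ℕ) = Q → (σ i : ℕ) = P + 1)

include hav hJP hPQ hQN hP hQ

lemma structS1 : ∀ i : Fin N, (i : ℕ) ≤ P → (σ i : ℕ) ≤ P := by
  intro i hi
  rcases eq_or_lt_of_le hi with he | hlt
  · rw [hP i he]; omega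
  by_contra hgt
  push_neg at hgt
  have hiQ : (σ i : ℕ) ≠ P + 1 := by
    intro he
    have : σ i = σ ⟨Q, by omega⟩ := Fin.ext (by rw [hQ ⟨Q, by omega⟩ rfl]; exact he)
    have := σ.injective this
    have := congrArg Fin.val this
    simp only [] at this
    omega
  exact (avoids_iff σ).mp hav i ⟨P, by omega⟩ ⟨Q, by omega⟩
    (Fin.lt_def.mpr hlt) (Fin.lt_def.mpr (by simp; omega))
    (Fin.lt_def.mpr (by rw [hP ⟨P, by omega⟩ rfl, hQ ⟨Q, by omega⟩ rfl]; omega))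
    (Fin.lt_def.mpr (by rw [hQ ⟨Q, by omega⟩ rfl]; omega))

lemma structS1c : ∀ i : Fin N, P < (i : ℕ) → P < (σ i : ℕ) := by
  intro i hi
  by_contra hle
  push_neg at hle
  have := seg_mem σ (Finset.univ.filter fun x : Fin N => (x : ℕ) ≤ P)
    (Finset.univ.filter fun x : Fin N => (x : ℕ) ≤ P)
    (fun x hx => by
      simp only [Finset.mem_filter, Finset.mem_univ, true_and] at hx ⊢
      exact structS1 hav hJP hPQ hQN hP hQ x hx)
    le_rfl i (by simp only [Finset.mem_filter, Finset.mem_univ, true_and]; exact hle)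
  simp only [Finset.mem_filter, Finset.mem_univ, true_and] at this
  omega

lemma structS2 : ∀ i : Fin N, (i : ℕ) < J → (σ i : ℕ) < J := by
  intro a ha
  by_contra hge
  push_neg at hge
  have haP : (σ a : ℕ) ≠ J := by
    intro he
    have : σ a = σ ⟨P, by omega⟩ := Fin.ext (by rw [hP ⟨P, by omega⟩ rfl]; exact he)
    have := congrArg Fin.val (σ.injective this)
    simp only [] at this
    omega
  -- U : positions with small σ-values
  set U := Finset.univ.filter (fun i : Fin N => 0 ≤ (σ i : ℕ) ∧ (σ i : ℕ) < J) with hU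
  have hcardU : U.card = J := by
    rw [hU, card_filter_sigma_val_Ico σ 0 J (by omega)]
    omega

  have hex : ∃ b ∈ U, J ≤ (b : ℕ) := by
    by_contra hax
    push_neg at hax
    have hsub : U ⊆ (Finset.univ.filter fun i : Fin N => 0 ≤ (i : ℕ) ∧ (i : ℕ) < J).erase a := by
      intro x hx
      refine Finset.mem_erase.mpr ⟨?_, ?_⟩
      · intro he
        subst he
        have := (Finset.mem_filter.mp hx).2
        omega
      · simp only [Finset.mem_filter, Finset.mem_univ, true_and]
        exact ⟨Nat.zero_le _, hax x hx⟩
    have hc := Finset.card_le_card hsub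
    rw [Finset.card_erase_of_mem (by
      simp only [Finset.mem_filter, Finset.mem_univ, true_and]; exact ⟨Nat.zero_le _, ha⟩),
      card_filter_val_Ico 0 J (by omega)] at hc
    omega
  obtain ⟨b, hb, hbJ⟩ := hex
  have hbv : (σ b : ℕ) < J := (Finset.mem_filter.mp hb).2.2
  have hbP : (b : ℕ) < P := by
    have := structS1c hav hJP hPQ hQN hP hQ b
    by_contra hc
    push_neg at hc
    rcases eq_or_lt_of_le hc with he | hlt
    · have := hP b he.symm; omega
    · have := this hlt; omega
  exact (avoids_iff σ).mp hav a b ⟨P, by omega⟩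
    (Fin.lt_def.mpr (by omega)) (Fin.lt_def.mpr (by simp; omega))
    (Fin.lt_def.mpr (by rw [hP ⟨P, by omega⟩ rfl]; omega))
    (Fin.lt_def.mpr (by rw [hP ⟨P, by omega⟩ rfl]; omega))

lemma structS2c : ∀ i : Fin N, (σ i : ℕ) < J → (i : ℕ) < J := by
  intro i hi
  have := seg_mem σ (Finset.univ.filter fun x : Fin N => (x : ℕ) < J)
    (Finset.univ.filter fun x : Fin N => (x : ℕ) < J)
    (fun x hx => by
      simp only [Finset.mem_filter, Finset.mem_univ, true_and] at hx ⊢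
      exact structS2 hav hJP hPQ hQN hP hQ x hx)
    le_rfl i (by simp only [Finset.mem_filter, Finset.mem_univ, true_and]; exact hi)
  simp only [Finset.mem_filter, Finset.mem_univ, true_and] at this
  exact this

end Struct

section Struct2

variable {N : ℕ} {J P Q : ℕ} {σ : Equiv.Perm (Fin N)}
  (hav : Avoids312 σ) (hJP : J < P) (hPQ : P < Q) (hQN : Q + 1 < N)
  (hP : ∀ i : Fin N, (i : ℕ) = P → (σ i : ℕ) = J)
  (hQ : ∀ i : Fin N, (i : ℕ) = Q → (σ i : ℕ) = P + 1)

include hav hJP hPQ hQN hP hQ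

lemma structS3 : ∀ i : Fin N, P < (i : ℕ) → (i : ℕ) < Q → (σ i : ℕ) ≤ Q := by
  intro m hm1 hm2
  by_contra hgt
  push_neg at hgt
  set V := Finset.univ.filter (fun i : Fin N => P + 2 ≤ (σ i : ℕ) ∧ (σ i : ℕ) < Q + 1) with hV
  have hcardV : V.card = Q - P - 1 := by
    rw [hV, card_filter_sigma_val_Ico σ (P+2) (Q+1) (by omega)]
    omega
  have hsub : V ⊆ (Finset.univ.filter fun i : Fin N => P + 1 ≤ (i : ℕ) ∧ (i : ℕ) < Q).erase m := by
    intro x hx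
    have hxv := (Finset.mem_filter.mp hx).2
    refine Finset.mem_erase.mpr ⟨?_, ?_⟩
    · intro he; subst he; omega
    · simp only [Finset.mem_filter, Finset.mem_univ, true_and]
      constructor
      · -- P + 1 ≤ x
        by_contra hc
        push_neg at hc
        have := structS1 hav hJP hPQ hQN hP hQ x (by omega)
        omega
      · -- x < Q
        by_contra hc
        push_neg at hc
        have hxQ : (x : ℕ) ≠ Q := by
          intro he
          have := hQ x he
          omega
        exact (avoids_iff σ).mp hav m ⟨Q, by omega⟩ x
          (Fin.lt_def.mpr (by simp; omega)) (Fin.lt_def.mpr (by simp; omega))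
          (Fin.lt_def.mpr (by rw [hQ ⟨Q, by omega⟩ rfl]; omega))
          (Fin.lt_def.mpr (by omega))
  have hc := Finset.card_le_card hsub
  rw [Finset.card_erase_of_mem (by
      simp only [Finset.mem_filter, Finset.mem_univ, true_and]; omega),
    card_filter_val_Ico (P+1) Q (by omega)] at hc
  omega

lemma structS3c : ∀ i : Fin N, Q < (i : ℕ) → Q < (σ i : ℕ) := by
  intro i hi
  by_contra hle
  push_neg at hle
  have := seg_mem σ (Finset.univ.filter fun x : Fin N => (x : ℕ) ≤ Q)
    (Finset.univ.filter fun x : Fin N => (x : ℕ) ≤ Q)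
    (fun x hx => by
      simp only [Finset.mem_filter, Finset.mem_univ, true_and] at hx ⊢
      rcases lt_trichotomy (x : ℕ) P with h | h | h
      · have := structS1 hav hJP hPQ hQN hP hQ x (by omega); omega
      · have := hP x h; omega
      · rcases eq_or_lt_of_le hx with he | hlt
        · have := hQ x he; omega
        · exact structS3 hav hJP hPQ hQN hP hQ x h hlt)
    le_rfl i (by simp only [Finset.mem_filter, Finset.mem_univ, true_and]; exact hle)
  simp only [Finset.mem_filter, Finset.mem_univ, true_and] at this
  omega

lemma structHA : ∀ i : Fin N, 0 ≤ (i : ℕ) → (i : ℕ) < 0 + J → 0 ≤ (σ i : ℕ) ∧ (σ i : ℕ) < 0 + J := by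
  intro i _ hi
  exact ⟨Nat.zero_le _, by have := structS2 hav hJP hPQ hQN hP hQ i (by omega); omega⟩

lemma structHB : ∀ i : Fin N, J ≤ (i : ℕ) → (i : ℕ) < J + (P - J) →
    J + 1 ≤ (σ i : ℕ) ∧ (σ i : ℕ) < J + 1 + (P - J) := by
  intro i hi1 hi2
  have hiP : (i : ℕ) < P := by omega
  have h1 : (σ i : ℕ) ≤ P := structS1 hav hJP hPQ hQN hP hQ i (by omega)
  have h2 : ¬ ((σ i : ℕ) < J) := fun hc => by
    have := structS2c hav hJP hPQ hQN hP hQ i hc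
    omega
  have h3 : (σ i : ℕ) ≠ J := by
    intro he
    have : σ i = σ ⟨P, by omega⟩ := Fin.ext (by rw [hP ⟨P, by omega⟩ rfl]; exact he)
    have := congrArg Fin.val (σ.injective this)
    simp only [] at this
    omega
  constructor
  · omega
  · omega

lemma structHC : ∀ i : Fin N, P + 1 ≤ (i : ℕ) → (i : ℕ) < P + 1 + (Q - P - 1) →
    P + 2 ≤ (σ i : ℕ) ∧ (σ i : ℕ) < P + 2 + (Q - P - 1) := by
  intro i hi1 hi2
  have hiQ : (i : ℕ) < Q := by omega
  have h1 : (σ i : ℕ) ≤ Q := structS3 hav hJP hPQ hQN hP hQ i (by omega) hiQ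
  have h2 : P < (σ i : ℕ) := structS1c hav hJP hPQ hQN hP hQ i (by omega)
  have h3 : (σ i : ℕ) ≠ P + 1 := by
    intro he
    have : σ i = σ ⟨Q, by omega⟩ := Fin.ext (by rw [hQ ⟨Q, by omega⟩ rfl]; exact he)
    have := congrArg Fin.val (σ.injective this)
    simp only [] at this
    omega
  constructor
  · omega
  · omega

lemma structHD : ∀ i : Fin N, Q + 1 ≤ (i : ℕ) → (i : ℕ) < Q + 1 + (N - 1 - Q) →
    Q + 1 ≤ (σ i : ℕ) ∧ (σ i : ℕ) < Q + 1 + (N - 1 - Q) := by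
  intro i hi1 _
  have h1 : Q < (σ i : ℕ) := structS3c hav hJP hPQ hQN hP hQ i (by omega)
  have h2 : (σ i : ℕ) < N := (σ i).is_lt
  exact ⟨by omega, by omega⟩

end Struct2

section Primed

variable {N : ℕ} (σ : Equiv.Perm (Fin N)) (p v m : ℕ)

lemma restrictPerm_apply' (hpm : p + m ≤ N) (H) (i : Fin m) (z : Fin N)
    (hz : (z : ℕ) = p + (i : ℕ)) :
    ((restrictPerm σ p v m hpm H i : Fin m) : ℕ) = (σ z : ℕ) - v := by
  have hzz : z = ⟨p + (i : ℕ), by omega⟩ := Fin.ext hz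
  rw [hzz]
  rfl

variable (a b c d : ℕ) (A : Equiv.Perm (Fin a)) (B : Equiv.Perm (Fin b))
  (C : Equiv.Perm (Fin c)) (D : Equiv.Perm (Fin d))

lemma g4_eq_A' {i : ℕ} (h : i < a) (z : Fin a) (hz : (z : ℕ) = i) :
    g4 a b c d A B C D i = A z := by
  rw [g4_eq_A a b c d A B C D h]
  exact congrArg Fin.val (congrArg A (Fin.ext hz.symm))

lemma g4_eq_B' {i : ℕ} (h1 : a ≤ i) (h2 : i < a + b) (z : Fin b) (hz : (z : ℕ) = i - a) :
    g4 a b c d A B C D i = ((B z : Fin b) : ℕ) + (a + 1) := by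
  rw [g4_eq_B a b c d A B C D h1 h2]
  exact congrArg (fun t : Fin b => (t : ℕ) + (a + 1)) (congrArg B (Fin.ext hz.symm))

lemma g4_eq_C' {i : ℕ} (h1 : a + b + 1 ≤ i) (h2 : i < a + b + 1 + c) (z : Fin c)
    (hz : (z : ℕ) = i - (a + b + 1)) :
    g4 a b c d A B C D i = ((C z : Fin c) : ℕ) + (a + b + 2) := by
  rw [g4_eq_C a b c d A B C D h1 h2]
  exact congrArg (fun t : Fin c => (t : ℕ) + (a + b + 2)) (congrArg C (Fin.ext hz.symm))

lemma g4_eq_D' {i : ℕ} (h1 : a + b + c + 2 ≤ i) (h2 : i < a + b + c + d + 2) (z : Fin d)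
    (hz : (z : ℕ) = i - (a + b + c + 2)) :
    g4 a b c d A B C D i = ((D z : Fin d) : ℕ) + (a + b + c + 2) := by
  rw [g4_eq_D a b c d A B C D h1 h2]
  exact congrArg (fun t : Fin d => (t : ℕ) + (a + b + c + 2)) (congrArg D (Fin.ext hz.symm))

end Primed

theorem card_two {N J P Q : ℕ} (hJP : J < P) (hPQ : P < Q) (hQN : Q + 1 < N)
    (hPN : P < N) (hQN' : Q < N) :
    ((avoiding N).filter fun σ : Equiv.Perm (Fin N) =>
        (σ ⟨P, hPN⟩ : ℕ) = J ∧ (σ ⟨Q, hQN'⟩ : ℕ) = P + 1).card =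
      (avoiding J).card * (avoiding (P - J)).card * (avoiding (Q - P - 1)).card *
        (avoiding (N - 1 - Q)).card := by
  classical
  have hsum : J + (P - J) + (Q - P - 1) + (N - 1 - Q) + 2 = N := by omega
  have hmem : ∀ σ : Equiv.Perm (Fin N),
      σ ∈ ((avoiding N).filter fun σ : Equiv.Perm (Fin N) =>
        (σ ⟨P, hPN⟩ : ℕ) = J ∧ (σ ⟨Q, hQN'⟩ : ℕ) = P + 1) →
      Avoids312 σ ∧ (∀ i : Fin N, (i : ℕ) = P → (σ i : ℕ) = J) ∧
        (∀ i : Fin N, (i : ℕ) = Q → (σ i : ℕ) = P + 1) := by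
    intro σ hσ
    rw [Finset.mem_filter] at hσ
    obtain ⟨hσ1, hσ2, hσ3⟩ := hσ
    refine ⟨(Finset.mem_filter.mp hσ1).2, ?_, ?_⟩
    · intro i hi
      have : i = ⟨P, hPN⟩ := Fin.ext hi
      rw [this]; exact hσ2
    · intro i hi
      have : i = ⟨Q, hQN'⟩ := Fin.ext hi
      rw [this]; exact hσ3
  have key : ((avoiding N).filter fun σ : Equiv.Perm (Fin N) =>
        (σ ⟨P, hPN⟩ : ℕ) = J ∧ (σ ⟨Q, hQN'⟩ : ℕ) = P + 1).card =
      (((avoiding J) ×ˢ (avoiding (P - J))) ×ˢ ((avoiding (Q - P - 1)) ×ˢ (avoiding (N - 1 - Q)))).card := by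
    refine Finset.card_bij'
      (fun σ hσ =>
        ((restrictPerm σ 0 0 J (by omega)
            (structHA (hmem σ hσ).1 hJP hPQ hQN (hmem σ hσ).2.1 (hmem σ hσ).2.2),
          restrictPerm σ J (J+1) (P - J) (by omega)
            (structHB (hmem σ hσ).1 hJP hPQ hQN (hmem σ hσ).2.1 (hmem σ hσ).2.2)),
         (restrictPerm σ (P+1) (P+2) (Q - P - 1) (by omega)
            (structHC (hmem σ hσ).1 hJP hPQ hQN (hmem σ hσ).2.1 (hmem σ hσ).2.2),
          restrictPerm σ (Q+1) (Q+1) (N - 1 - Q) (by omega)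
            (structHD (hmem σ hσ).1 hJP hPQ hQN (hmem σ hσ).2.1 (hmem σ hσ).2.2))))
      (fun x _ => glue4 J (P - J) (Q - P - 1) (N - 1 - Q) x.1.1 x.1.2 x.2.1 x.2.2 hsum)
      ?_ ?_ ?_ ?_
    · -- extraction lands in the product
      intro σ hσ
      simp only [Finset.mem_product]
      refine ⟨⟨?_, ?_⟩, ?_, ?_⟩ <;>
        · simp only [avoiding, Finset.mem_filter, Finset.mem_univ, true_and]
          exact restrictPerm_avoids _ _ _ _ _ _ (hmem σ hσ).1
    · -- glue lands in the set
      intro x hx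
      simp only [Finset.mem_product, avoiding, Finset.mem_filter, Finset.mem_univ, true_and] at hx
      rw [Finset.mem_filter]
      refine ⟨?_, ?_, ?_⟩
      · simp only [avoiding, Finset.mem_filter, Finset.mem_univ, true_and]
        exact glue4_avoids _ _ _ _ _ _ _ _ hsum hx.1.1 hx.1.2 hx.2.1 hx.2.2
      · have h1 : ((⟨P, hPN⟩ : Fin N) : ℕ) = J + (P - J) := by simp; omega
        rw [glue4_apply, h1, g4_eq_p1]
      · have h1 : ((⟨Q, hQN'⟩ : Fin N) : ℕ) = J + (P - J) + 1 + (Q - P - 1) := by simp; omega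
        rw [glue4_apply, h1, g4_eq_p2]
        omega
    · -- left inverse : glue (restrict) = σ
      intro σ hσ
      apply Equiv.ext
      intro x
      apply Fin.ext
      rw [glue4_apply]
      by_cases hx1 : (x : ℕ) < J
      · rw [g4_eq_A' _ _ _ _ _ _ _ _ hx1 ⟨(x : ℕ), hx1⟩ rfl,
          restrictPerm_apply' σ 0 0 J _ _ _ x (by simp)]
        omega
      · by_cases hx2 : (x : ℕ) < P
        · rw [g4_eq_B' _ _ _ _ _ _ _ _ (by omega) (by omega) ⟨(x : ℕ) - J, by omega⟩ rfl,
            restrictPerm_apply' σ J (J+1) (P - J) _ _ _ x (by simp; omega)]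
          have := structHB (hmem σ hσ).1 hJP hPQ hQN (hmem σ hσ).2.1 (hmem σ hσ).2.2 x
            (by omega) (by omega)
          omega
        · by_cases hx3 : (x : ℕ) = P
          · rw [show (x : ℕ) = J + (P - J) by omega, g4_eq_p1]
            exact ((hmem σ hσ).2.1 x hx3).symm
          · by_cases hx4 : (x : ℕ) < Q
            · rw [g4_eq_C' _ _ _ _ _ _ _ _ (by omega) (by omega)
                ⟨(x : ℕ) - (J + (P - J) + 1), by omega⟩ rfl,
                restrictPerm_apply' σ (P+1) (P+2) (Q - P - 1) _ _ _ x (by simp; omega)]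
              have := structHC (hmem σ hσ).1 hJP hPQ hQN (hmem σ hσ).2.1 (hmem σ hσ).2.2 x
                (by omega) (by omega)
              omega
            · by_cases hx5 : (x : ℕ) = Q
              · rw [show (x : ℕ) = J + (P - J) + 1 + (Q - P - 1) by omega, g4_eq_p2]
                have := (hmem σ hσ).2.2 x hx5
                omega
              · have hxN : (x : ℕ) < N := x.is_lt
                rw [g4_eq_D' _ _ _ _ _ _ _ _ (by omega) (by omega)
                  ⟨(x : ℕ) - (J + (P - J) + (Q - P - 1) + 2), by omega⟩ rfl,
                  restrictPerm_apply' σ (Q+1) (Q+1) (N - 1 - Q) _ _ _ x (by simp; omega)]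
                have := structHD (hmem σ hσ).1 hJP hPQ hQN (hmem σ hσ).2.1 (hmem σ hσ).2.2 x
                  (by omega) (by omega)
                omega
    · -- right inverse : restrict (glue) = components
      intro x hx
      obtain ⟨⟨A0, B0⟩, C0, D0⟩ := x
      simp only [Prod.mk.injEq]
      refine ⟨⟨?_, ?_⟩, ?_, ?_⟩
      · apply Equiv.ext
        intro z
        apply Fin.ext
        have hz := z.is_lt
        show g4 J (P - J) (Q - P - 1) (N - 1 - Q) A0 B0 C0 D0 (0 + (z : ℕ)) - 0 = ((A0 z : Fin J) : ℕ)
        rw [g4_eq_A' J (P - J) (Q - P - 1) (N - 1 - Q) A0 B0 C0 D0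
          (show 0 + (z : ℕ) < J by omega) z (by omega)]
        omega
      · apply Equiv.ext
        intro z
        apply Fin.ext
        have hz := z.is_lt
        show g4 J (P - J) (Q - P - 1) (N - 1 - Q) A0 B0 C0 D0 (J + (z : ℕ)) - (J + 1) =
          ((B0 z : Fin (P - J)) : ℕ)
        rw [g4_eq_B' J (P - J) (Q - P - 1) (N - 1 - Q) A0 B0 C0 D0
          (show J ≤ J + (z : ℕ) by omega) (show J + (z : ℕ) < J + (P - J) by omega) z (by omega)]
        omega
      · apply Equiv.ext
        intro z
        apply Fin.ext
        have hz := z.is_lt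
        show g4 J (P - J) (Q - P - 1) (N - 1 - Q) A0 B0 C0 D0 ((P + 1) + (z : ℕ)) - (P + 2) =
          ((C0 z : Fin (Q - P - 1)) : ℕ)
        rw [g4_eq_C' J (P - J) (Q - P - 1) (N - 1 - Q) A0 B0 C0 D0
          (show J + (P - J) + 1 ≤ (P + 1) + (z : ℕ) by omega)
          (show (P + 1) + (z : ℕ) < J + (P - J) + 1 + (Q - P - 1) by omega) z (by omega)]
        omega
      · apply Equiv.ext
        intro z
        apply Fin.ext
        have hz := z.is_lt
        show g4 J (P - J) (Q - P - 1) (N - 1 - Q) A0 B0 C0 D0 ((Q + 1) + (z : ℕ)) - (Q + 1) =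
          ((D0 z : Fin (N - 1 - Q)) : ℕ)
        rw [g4_eq_D' J (P - J) (Q - P - 1) (N - 1 - Q) A0 B0 C0 D0
          (show J + (P - J) + (Q - P - 1) + 2 ≤ (Q + 1) + (z : ℕ) by omega)
          (show (Q + 1) + (z : ℕ) < J + (P - J) + (Q - P - 1) + (N - 1 - Q) + 2 by omega) z (by omega)]
        omega
  rw [key]
  rw [Finset.card_product, Finset.card_product, Finset.card_product]
  ring

section Glue2

variable (a b : ℕ) (A : Equiv.Perm (Fin a)) (B : Equiv.Perm (Fin b))

def g2 (i : ℕ) : ℕ :=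
  if h1 : i < a then A ⟨i, h1⟩
  else if h2 : i < a + b then ((B ⟨i - a, by omega⟩ : Fin b) : ℕ) + (a + 1)
  else a

lemma g2_eq_A {i : ℕ} (h : i < a) : g2 a b A B i = A ⟨i, h⟩ := dif_pos h

lemma g2_eq_A' {i : ℕ} (h : i < a) (z : Fin a) (hz : (z : ℕ) = i) : g2 a b A B i = A z := by
  rw [g2_eq_A a b A B h]
  exact congrArg Fin.val (congrArg A (Fin.ext hz.symm))

lemma g2_eq_B {i : ℕ} (h1 : a ≤ i) (h2 : i < a + b) :
    g2 a b A B i = ((B ⟨i - a, by omega⟩ : Fin b) : ℕ) + (a + 1) := by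
  unfold g2; rw [dif_neg (by omega), dif_pos h2]

lemma g2_eq_B' {i : ℕ} (h1 : a ≤ i) (h2 : i < a + b) (z : Fin b) (hz : (z : ℕ) = i - a) :
    g2 a b A B i = ((B z : Fin b) : ℕ) + (a + 1) := by
  rw [g2_eq_B a b A B h1 h2]
  exact congrArg (fun t : Fin b => (t : ℕ) + (a + 1)) (congrArg B (Fin.ext hz.symm))

lemma g2_eq_p {i : ℕ} (h : i = a + b) : g2 a b A B i = a := by
  unfold g2; rw [dif_neg (by omega), dif_neg (by omega)]

lemma g2_cases (i : ℕ) (hi : i < a + b + 1) :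
    (i < a ∧ g2 a b A B i < a) ∨
    (a ≤ i ∧ i < a + b ∧ a + 1 ≤ g2 a b A B i ∧ g2 a b A B i < a + b + 1) ∨
    (i = a + b ∧ g2 a b A B i = a) := by
  by_cases h1 : i < a
  · exact Or.inl ⟨h1, by rw [g2_eq_A a b A B h1]; exact (A ⟨i, h1⟩).is_lt⟩
  by_cases h2 : i < a + b
  · refine Or.inr (Or.inl ⟨by omega, h2, ?_, ?_⟩) <;> rw [g2_eq_B a b A B (by omega) h2]
    · omega
    · exact lt_of_lt_of_le (Nat.add_lt_add_right (Fin.is_lt _) _) (by omega)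
  · exact Or.inr (Or.inr ⟨by omega, g2_eq_p a b A B (by omega)⟩)

lemma g2_inj {i j : ℕ} (hi : i < a + b + 1) (hj : j < a + b + 1)
    (h : g2 a b A B i = g2 a b A B j) : i = j := by
  rcases g2_cases a b A B i hi with (⟨p1, p2⟩ | ⟨p1, p1', p2, p2'⟩ | ⟨p1, p2⟩) <;>
  rcases g2_cases a b A B j hj with (⟨q1, q2⟩ | ⟨q1, q1', q2, q2'⟩ | ⟨q1, q2⟩)
  all_goals try omega
  · rw [g2_eq_A a b A B p1, g2_eq_A a b A B q1] at h
    have := congrArg Fin.val (A.injective (Fin.ext h))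
    simpa using this
  · rw [g2_eq_B a b A B p1 p1'] at h
    rw [g2_eq_B a b A B q1 q1'] at h
    have := congrArg Fin.val (B.injective (Fin.ext (Nat.add_right_cancel h)))
    simp only [] at this
    omega

lemma g2_avoids_aux (hA : Avoids312 A) (hB : Avoids312 B)
    {i1 i2 i3 : ℕ} (hi3 : i3 < a + b + 1) (h12 : i1 < i2) (h23 : i2 < i3)
    (hv1 : g2 a b A B i2 < g2 a b A B i3) (hv2 : g2 a b A B i3 < g2 a b A B i1) : False := by
  rcases g2_cases a b A B i1 (by omega) with (⟨p1, p2⟩ | ⟨p1, p1', p2, p2'⟩ | ⟨p1, p2⟩) <;>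
  rcases g2_cases a b A B i2 (by omega) with (⟨q1, q2⟩ | ⟨q1, q1', q2, q2'⟩ | ⟨q1, q2⟩) <;>
  rcases g2_cases a b A B i3 hi3 with (⟨r1, r2⟩ | ⟨r1, r1', r2, r2'⟩ | ⟨r1, r2⟩)
  all_goals try omega
  · rw [g2_eq_A a b A B q1] at hv1
    rw [g2_eq_A a b A B r1] at hv1 hv2
    rw [g2_eq_A a b A B p1] at hv2
    exact (avoids_iff A).mp hA ⟨i1, p1⟩ ⟨i2, q1⟩ ⟨i3, r1⟩ (Fin.mk_lt_mk.mpr h12)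
      (Fin.mk_lt_mk.mpr h23) (Fin.lt_def.mpr hv1) (Fin.lt_def.mpr hv2)
  · rw [g2_eq_B a b A B q1 q1'] at hv1
    rw [g2_eq_B a b A B r1 r1'] at hv1 hv2
    rw [g2_eq_B a b A B p1 p1'] at hv2
    exact (avoids_iff B).mp hB _ _ _ (Fin.mk_lt_mk.mpr (by omega)) (Fin.mk_lt_mk.mpr (by omega))
      (Fin.lt_def.mpr (Nat.lt_of_add_lt_add_right hv1))
      (Fin.lt_def.mpr (Nat.lt_of_add_lt_add_right hv2))

noncomputable def glue2 {n : ℕ} (hn : a + b + 1 = n) : Equiv.Perm (Fin n) :=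
  Equiv.ofBijective
    (fun i => (⟨g2 a b A B i, by
      rcases g2_cases a b A B i (by omega) with (⟨p1, p2⟩ | ⟨p1, p1', p2, p2'⟩ | ⟨p1, p2⟩) <;>
        omega⟩ : Fin n))
    (by
      rw [← Finite.injective_iff_bijective]
      intro i j hij
      have := congrArg Fin.val hij
      simp only [] at this
      exact Fin.ext (g2_inj a b A B (by omega) (by omega) this))

lemma glue2_apply {n : ℕ} (hn : a + b + 1 = n) (i : Fin n) :
    ((glue2 a b A B hn i : Fin n) : ℕ) = g2 a b A B (i : ℕ) := rfl

lemma glue2_avoids {n : ℕ} (hn : a + b + 1 = n) (hA : Avoids312 A) (hB : Avoids312 B) :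
    Avoids312 (glue2 a b A B hn) := by
  rw [avoids_iff]
  intro i1 i2 i3 h12 h23 hv1 hv2
  rw [Fin.lt_def] at h12 h23 hv1 hv2
  rw [glue2_apply, glue2_apply] at hv1 hv2
  exact g2_avoids_aux a b A B hA hB (by omega) h12 h23 hv1 hv2

end Glue2

section StructLast

variable {n v : ℕ} {σ : Equiv.Perm (Fin n)}
  (hav : Avoids312 σ) (hv : v < n)
  (hlast : ∀ i : Fin n, (i : ℕ) = n - 1 → (σ i : ℕ) = v)

include hav hv hlast

lemma structT2 : ∀ i : Fin n, (i : ℕ) < v → (σ i : ℕ) < v := by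
  intro a ha
  by_contra hge
  push_neg at hge
  have hne : (σ a : ℕ) ≠ v := by
    intro he
    have : σ a = σ ⟨n - 1, by omega⟩ := Fin.ext (by rw [hlast ⟨n - 1, by omega⟩ rfl]; exact he)
    have := congrArg Fin.val (σ.injective this)
    simp only [] at this
    omega
  set U := Finset.univ.filter (fun i : Fin n => 0 ≤ (σ i : ℕ) ∧ (σ i : ℕ) < v) with hU
  have hcardU : U.card = v := by
    rw [hU, card_filter_sigma_val_Ico σ 0 v (by omega)]
    omega
  have hex : ∃ b ∈ U, v ≤ (b : ℕ) := by
    by_contra hax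
    push_neg at hax
    have hsub : U ⊆ (Finset.univ.filter fun i : Fin n => 0 ≤ (i : ℕ) ∧ (i : ℕ) < v).erase a := by
      intro x hx
      refine Finset.mem_erase.mpr ⟨?_, ?_⟩
      · intro he
        subst he
        have := (Finset.mem_filter.mp hx).2
        omega
      · simp only [Finset.mem_filter, Finset.mem_univ, true_and]
        exact ⟨Nat.zero_le _, hax x hx⟩
    have hc := Finset.card_le_card hsub
    rw [Finset.card_erase_of_mem (by
      simp only [Finset.mem_filter, Finset.mem_univ, true_and]; exact ⟨Nat.zero_le _, ha⟩),
      card_filter_val_Ico 0 v (by omega)] at hc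
    omega
  obtain ⟨b, hb, hbv⟩ := hex
  have hbval : (σ b : ℕ) < v := (Finset.mem_filter.mp hb).2.2
  have hbn : (b : ℕ) < n - 1 := by
    have hble : (b : ℕ) ≤ n - 1 := by have := b.is_lt; omega
    rcases eq_or_lt_of_le hble with he | hlt
    · have := hlast b he; omega
    · exact hlt
  exact (avoids_iff σ).mp hav a b ⟨n - 1, by omega⟩
    (Fin.lt_def.mpr (by omega)) (Fin.lt_def.mpr (by simp; omega))
    (Fin.lt_def.mpr (by rw [hlast ⟨n - 1, by omega⟩ rfl]; omega))
    (Fin.lt_def.mpr (by rw [hlast ⟨n - 1, by omega⟩ rfl]; omega))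

lemma structT2c : ∀ i : Fin n, (σ i : ℕ) < v → (i : ℕ) < v := by
  intro i hi
  have := seg_mem σ (Finset.univ.filter fun x : Fin n => (x : ℕ) < v)
    (Finset.univ.filter fun x : Fin n => (x : ℕ) < v)
    (fun x hx => by
      simp only [Finset.mem_filter, Finset.mem_univ, true_and] at hx ⊢
      exact structT2 hav hv hlast x hx)
    le_rfl i (by simp only [Finset.mem_filter, Finset.mem_univ, true_and]; exact hi)
  simp only [Finset.mem_filter, Finset.mem_univ, true_and] at this
  exact this

lemma structTA : ∀ i : Fin n, 0 ≤ (i : ℕ) → (i : ℕ) < 0 + v →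
    0 ≤ (σ i : ℕ) ∧ (σ i : ℕ) < 0 + v := by
  intro i _ hi
  exact ⟨Nat.zero_le _, by have := structT2 hav hv hlast i (by omega); omega⟩

lemma structTB : ∀ i : Fin n, v ≤ (i : ℕ) → (i : ℕ) < v + (n - 1 - v) →
    v + 1 ≤ (σ i : ℕ) ∧ (σ i : ℕ) < v + 1 + (n - 1 - v) := by
  intro i hi1 hi2
  have h1 : ¬ ((σ i : ℕ) < v) := fun hc => by
    have := structT2c hav hv hlast i hc
    omega
  have h2 : (σ i : ℕ) ≠ v := by
    intro he
    have : σ i = σ ⟨n - 1, by omega⟩ := Fin.ext (by rw [hlast ⟨n - 1, by omega⟩ rfl]; exact he)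
    have := congrArg Fin.val (σ.injective this)
    simp only [] at this
    omega
  have h3 : (σ i : ℕ) < n := (σ i).is_lt
  exact ⟨by omega, by omega⟩

end StructLast

lemma card_fiber_last (n v : ℕ) (hv : v < n + 1) (z : Fin (n + 1)) (hz : (z : ℕ) = n) :
    ((avoiding (n + 1)).filter fun σ => (σ z : ℕ) = v).card =
      (avoiding v).card * (avoiding (n - v)).card := by
  classical
  have hsum : v + (n - v) + 1 = n + 1 := by omega
  have hmem : ∀ σ : Equiv.Perm (Fin (n + 1)),
      σ ∈ ((avoiding (n + 1)).filter fun σ => (σ z : ℕ) = v) →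
      Avoids312 σ ∧ (∀ i : Fin (n + 1), (i : ℕ) = (n + 1) - 1 → (σ i : ℕ) = v) := by
    intro σ hσ
    rw [Finset.mem_filter] at hσ
    refine ⟨(Finset.mem_filter.mp hσ.1).2, ?_⟩
    intro i hi
    have : i = z := Fin.ext (by omega)
    rw [this]; exact hσ.2
  have key : ((avoiding (n + 1)).filter fun σ => (σ z : ℕ) = v).card =
      ((avoiding v) ×ˢ (avoiding (n - v))).card := by
    refine Finset.card_bij'
      (fun σ hσ =>
        (restrictPerm σ 0 0 v (by omega)
            (structTA (hmem σ hσ).1 (by omega) (hmem σ hσ).2),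
         restrictPerm σ v (v + 1) (n - v) (by omega)
            (structTB (hmem σ hσ).1 (by omega) (hmem σ hσ).2)))
      (fun x _ => glue2 v (n - v) x.1 x.2 hsum)
      ?_ ?_ ?_ ?_
    · intro σ hσ
      simp only [Finset.mem_product]
      constructor
      · simp only [avoiding, Finset.mem_filter, Finset.mem_univ, true_and]
        exact restrictPerm_avoids _ _ _ _ _ _ (hmem σ hσ).1
      · simp only [avoiding, Finset.mem_filter, Finset.mem_univ, true_and]
        exact restrictPerm_avoids _ _ _ _ _ _ (hmem σ hσ).1
    · intro x hx
      simp only [Finset.mem_product, avoiding, Finset.mem_filter, Finset.mem_univ, true_and] at hx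
      rw [Finset.mem_filter]
      refine ⟨?_, ?_⟩
      · simp only [avoiding, Finset.mem_filter, Finset.mem_univ, true_and]
        exact glue2_avoids _ _ _ _ hsum hx.1 hx.2
      · rw [glue2_apply, g2_eq_p v (n - v) x.1 x.2 (by omega)]
    · intro σ hσ
      apply Equiv.ext
      intro x
      apply Fin.ext
      dsimp only
      rw [glue2_apply]
      by_cases hx1 : (x : ℕ) < v
      · rw [g2_eq_A' _ _ _ _ hx1 ⟨(x : ℕ), hx1⟩ rfl,
          restrictPerm_apply' σ 0 0 v _ _ _ x (by simp)]
        omega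
      · by_cases hx2 : (x : ℕ) < v + (n - v)
        · rw [g2_eq_B' _ _ _ _ (by omega) hx2 ⟨(x : ℕ) - v, by omega⟩ rfl,
            restrictPerm_apply' σ v (v + 1) (n - v) _ _ _ x (by simp; omega)]
          have := structTB (hmem σ hσ).1 (show v < n + 1 by omega) (hmem σ hσ).2 x
            (by omega) (by omega)
          omega
        · have hx3 : (x : ℕ) = v + (n - v) := by have := x.is_lt; omega
          rw [g2_eq_p v (n - v) _ _ hx3]
          have := (hmem σ hσ).2 x (by omega)
          omega
    · intro x hx
      obtain ⟨A0, B0⟩ := x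
      simp only [Prod.mk.injEq]
      constructor
      · apply Equiv.ext
        intro w
        apply Fin.ext
        have hw := w.is_lt
        show g2 v (n - v) A0 B0 (0 + (w : ℕ)) - 0 = ((A0 w : Fin v) : ℕ)
        rw [g2_eq_A' v (n - v) A0 B0 (show 0 + (w : ℕ) < v by omega) w (by omega)]
        omega
      · apply Equiv.ext
        intro w
        apply Fin.ext
        have hw := w.is_lt
        show g2 v (n - v) A0 B0 (v + (w : ℕ)) - (v + 1) = ((B0 w : Fin (n - v)) : ℕ)
        have hww : (w : ℕ) < n - v := by omega
        rw [g2_eq_B' v (n - v) A0 B0 (show v ≤ v + (w : ℕ) by omega)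
          (show v + (w : ℕ) < v + (n - v) by omega) w (by omega)]
        omega
  rw [key, Finset.card_product]

lemma card_avoiding : ∀ n : ℕ, (avoiding n).card = catalan n := by
  intro n
  induction n using Nat.strong_induction_on with
  | _ n ih =>
    match n with
    | 0 =>
      have : (avoiding 0) = Finset.univ := by
        ext σ
        simp only [avoiding, Finset.mem_filter, Finset.mem_univ, true_and, iff_true]
        exact fun ⟨i, _⟩ => i.elim0
      rw [this, catalan_zero]
      simp [Finset.card_univ]
    | (m + 1) =>
      have hstep := Finset.card_eq_sum_card_fiberwise
        (f := fun σ : Equiv.Perm (Fin (m + 1)) => ((σ ⟨m, Nat.lt_succ_self m⟩ : Fin (m + 1)) : ℕ))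
        (s := avoiding (m + 1)) (t := Finset.range (m + 1))
        (fun σ _ => Finset.mem_range.mpr (σ ⟨m, Nat.lt_succ_self m⟩).is_lt)
      rw [hstep, catalan_succ' m]
      rw [Nat.sum_antidiagonal_eq_sum_range_succ (fun x y => catalan x * catalan y) m]
      refine Finset.sum_congr rfl ?_
      intro v hv
      rw [Finset.mem_range] at hv
      rw [card_fiber_last m v hv ⟨m, Nat.lt_succ_self m⟩ rfl, ih v (by omega), ih (m - v) (by omega)]

theorem stmt9 (N t₁ t₂ j₁ j₂ : ℕ) (hN : 0 < N) (ht₁ : 0 < t₁) (ht₂ : 0 < t₂)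
    (hj₁ : 0 < j₁) (hj₂ : 0 < j₂)
    (h1 : j₁ < N - t₁) (h2 : N - t₁ < N - t₂) (h3 : j₁ < j₂) (h4 : j₂ < N - t₂)
    (h5 : j₂ = N - t₁ + 1) :
    (STwo N (N - t₁) (N - t₂) j₁ j₂).card =
      catalan (N - t₁ - j₁) * catalan (t₁ - t₂ - 1) * catalan (j₁ - 1) * catalan t₂ := by
  have hb1 : t₁ < N := by omega
  have hb2 : t₂ < t₁ := by omega
  have hb3 : 2 ≤ N - t₂ := by omega
  have hPN : N - t₁ - 1 < N := by omega
  have hQN' : N - t₂ - 1 < N := by omega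
  have hJP : j₁ - 1 < N - t₁ - 1 := by omega
  have hPQ : N - t₁ - 1 < N - t₂ - 1 := by omega
  have hQN : (N - t₂ - 1) + 1 < N := by omega
  have hset : STwo N (N - t₁) (N - t₂) j₁ j₂ =
      (avoiding N).filter fun σ : Equiv.Perm (Fin N) =>
        (σ ⟨N - t₁ - 1, hPN⟩ : ℕ) = j₁ - 1 ∧ (σ ⟨N - t₂ - 1, hQN'⟩ : ℕ) = (N - t₁ - 1) + 1 := by
    unfold STwo
    apply Finset.filter_congr
    intro σ _
    unfold STwoPred permVal
    rw [dif_pos hPN, dif_pos hQN']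
    constructor
    · rintro ⟨u1, u2⟩
      exact ⟨by omega, by omega⟩
    · rintro ⟨u1, u2⟩
      exact ⟨by omega, by omega⟩
  rw [hset, card_two hJP hPQ hQN hPN hQN', card_avoiding, card_avoiding, card_avoiding,
    card_avoiding]
  have e1 : (N - t₁ - 1) - (j₁ - 1) = N - t₁ - j₁ := by omega
  have e2 : (N - t₂ - 1) - (N - t₁ - 1) - 1 = t₁ - t₂ - 1 := by omega
  have e3 : N - 1 - (N - t₂ - 1) = t₂ := by omega
  have e4 : j₁ - 1 = j₁ - 1 := rfl
  rw [e1, e2, e3]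
  ring
end
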